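/- Let p be an odd prime, n a positive integer, q = pⁿ with q ≡ 3 (mod 4), and K a finite field with q² elements with F its subfield of order q. Let k be an integer with 0 < k < n and n/gcd(k,n) odd, let b be a nonsquare in K \ {0}, and fix ξ ∈ K \ F. Define f : K → K by f(x) = b x^{p^k+1} + (b x^{p^k+1})^q + ξ x^{q+1} (the planar function of a Budaghyan–Helleseth semifield). Then for all a, c ∈ K the number of x ∈ K with f(x+a) − c ∈ ξF equals 1 if c ∈ ξF and equals q+1 if c ∉ ξF; hence U_ξ = {(x, tξ) : x ∈ K, t ∈ F} ∪ {(∞)} is a unital in the Budaghyan–Helleseth semifield plane Π(f). In particular, for every a ∈ F the number of y ∈ K with by² + (by²)^q = a equals q+1 if a ≠ 0 and equals 1 if a = 0. -/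

import Mathlib

/-- The point set of the shift plane `Π(f)`: affine points `(x,y)`, points at
infinity `(a)` for `a ∈ K`, and the point `(∞)`. -/
abbrev ShiftPt (K : Type) : Type := (K × K) ⊕ (K ⊕ Unit)

/-- The affine line `L_{a,b} = {(x, f(x+a) − b) : x ∈ K} ∪ {(a)}` of the shift plane. -/
def affLine (K : Type) [Field K] (f : K → K) (a b : K) : Set (ShiftPt K) :=
  {P | (∃ x : K, P = Sum.inl (x, f (x + a) - b)) ∨ P = Sum.inr (Sum.inl a)}

/-- The vertical line `N_a = {(a,y) : y ∈ K} ∪ {(∞)}` of the shift plane. -/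
def vertLine (K : Type) [Field K] (a : K) : Set (ShiftPt K) :=
  {P | (∃ y : K, P = Sum.inl (a, y)) ∨ P = Sum.inr (Sum.inr ())}

/-- The line at infinity of the shift plane. -/
def lineAtInf (K : Type) : Set (ShiftPt K) :=
  {P | ∃ s : K ⊕ Unit, P = Sum.inr s}

/-- The set of all lines of the shift plane `Π(f)`. -/
def shiftLines (K : Type) [Field K] (f : K → K) : Set (Set (ShiftPt K)) :=
  {L | (∃ a b : K, L = affLine K f a b) ∨ (∃ a : K, L = vertLine K a) ∨ L = lineAtInf K}

/-- The set `θF = {tθ : t ∈ F}`, where `F = {t : t^q = t}` is the subfield of order `q`. -/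
def scalarSet (K : Type) [Field K] (q : ℕ) (θ : K) : Set K :=
  {c | ∃ t : K, t ^ q = t ∧ c = t * θ}

/-- The point set `U_θ = {(x, tθ) : x ∈ K, t ∈ F} ∪ {(∞)}`. -/
def unitalSet (K : Type) [Field K] (q : ℕ) (θ : K) : Set (ShiftPt K) :=
  {P | (∃ x t : K, t ^ q = t ∧ P = Sum.inl (x, t * θ)) ∨ P = Sum.inr (Sum.inr ())}

/-!
Write `F = {t | t ^ q = t}`, `m = p ^ k + 1` and `T y = b y ^ m + (b y ^ m) ^ q`. Since
`K = F ⊕ ξF` and `f y = T y + y ^ (q + 1) ξ` with `T y, y ^ (q + 1) ∈ F`, the condition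
`f (x + a) - c ∈ ξF` says that `T (x + a)` is the `F`-coordinate of `c`, which vanishes exactly
when `c ∈ ξF`. So everything comes down to the fibres of `T : K → F`.

The fibre over `0` is `{0}`: `w + w ^ q = 0` forces `w ^ (q - 1) = -1`, and for `q ≡ 3 (mod 4)`
this makes `w` a square, while `b y ^ m` is not one. The fibres over `F*` all have the same size
`c`: `y ↦ s y` maps the fibre over `e` onto the fibre over `s ^ m e`, and every element of `F*` is
an `m`-th power in the cyclic group `K*`, since `gcd (p ^ k + 1) (q ^ 2 - 1) ∣ q + 1` when
`n / gcd k n` is odd. Counting `K` fibrewise gives `q ^ 2 = 1 + (q - 1) c`, so `c = q + 1`.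
-/

theorem Nat.gcd_pow_add_one_pow_two_mul_sub_one_dvd {a k n : ℕ} (ha : Odd a)
    (hkn : Odd (n / k.gcd n)) : (a ^ k + 1).gcd (a ^ (2 * n) - 1) ∣ a ^ n + 1 := by
  set r := (a ^ k + 1).gcd (a ^ (2 * n) - 1)
  set d := k.gcd n
  obtain ⟨k', hk⟩ : d ∣ k := k.gcd_dvd_left n
  obtain ⟨n', hn⟩ : d ∣ n := k.gcd_dvd_right n
  have hd : 0 < d := Nat.pos_of_ne_zero fun h => by simp [d, h] at hkn
  rw [hn, Nat.mul_div_cancel_left _ hd] at hkn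
  have hak : (a : ZMod r) ^ k = -1 := by
    rw [eq_neg_iff_add_eq_zero]
    exact_mod_cast (ZMod.natCast_eq_zero_iff _ r).mpr (Nat.gcd_dvd_left _ _)
  have ha2n : (a : ZMod r) ^ (2 * n) = 1 := by
    have h1 : 1 ≤ a ^ (2 * n) := Nat.one_le_pow _ _ ha.pos
    have := (ZMod.natCast_eq_zero_iff _ r).mpr (Nat.gcd_dvd_right (a ^ k + 1) _)
    rwa [Nat.cast_sub h1, sub_eq_zero, Nat.cast_pow, Nat.cast_one] at this
  set x := (a : ZMod r) ^ d
  have hx2 : x ^ 2 = 1 := by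
    have h2k : (a : ZMod r) ^ (2 * k) = 1 := by rw [mul_comm, pow_mul, hak]; norm_num
    have := pow_gcd_eq_one.mpr ⟨h2k, ha2n⟩
    rwa [Nat.gcd_mul_left, mul_comm, pow_mul] at this
  have hodd_pow : ∀ j, Odd j → x ^ j = x := by
    rintro j ⟨i, rfl⟩
    rw [pow_succ, pow_mul, hx2, one_pow, one_mul]
  have han : (a : ZMod r) ^ n = x := by rw [hn, pow_mul, hodd_pow _ hkn]
  -- `a ^ k = x ^ k'`, so `a ^ n = -1` in `ZMod r` when `k'` is odd, and `-1 = 1` when it is even.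
  rcases Nat.even_or_odd k' with hk' | hk'
  · have hr2 : r ∣ 2 := by
      obtain ⟨i, rfl⟩ := hk'
      have h : (1 : ZMod r) = -1 := by
        rw [← hak, hk, pow_mul, ← two_mul, pow_mul, hx2, one_pow]
      have : ((2 : ℕ) : ZMod r) = 0 := by
        rw [Nat.cast_ofNat]; linear_combination h
      exact (ZMod.natCast_eq_zero_iff _ r).mp this
    exact hr2.trans (even_iff_two_dvd.mp (ha.pow.add_one))
  · rw [← ZMod.natCast_eq_zero_iff]
    push_cast
    rw [han, ← hodd_pow _ hk', ← pow_mul, ← hk, hak, neg_add_cancel]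

theorem IsCyclic.exists_pow_eq_iff {G : Type*} [CommGroup G] [IsCyclic G] [Finite G]
    {m : ℕ} {x : G} : (∃ y, y ^ m = x) ↔ x ^ (Nat.card G / (Nat.card G).gcd m) = 1 := by
  set N := Nat.card G
  have hle : (powMonoidHom m : G →* G).range ≤ (powMonoidHom (N / N.gcd m)).ker := by
    rintro _ ⟨y, rfl⟩
    have : m * (N / N.gcd m) = N * (m / N.gcd m) := by
      rw [← Nat.mul_div_assoc _ (N.gcd_dvd_left m), ← Nat.mul_div_assoc _ (N.gcd_dvd_right m),
        mul_comm]
    simp only [MonoidHom.mem_ker, powMonoidHom_apply]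
    rw [← pow_mul, this, pow_mul, pow_card_eq_one', one_pow]
  have hrange := Subgroup.eq_of_le_of_card_ge hle (by
    rw [card_powMonoidHom_range, card_powMonoidHom_ker,
      Nat.gcd_eq_right (Nat.div_dvd_of_dvd (N.gcd_dvd_left m))])
  simpa using SetLike.ext_iff.mp hrange x

theorem pow_sub_one_eq_one_of_pow_eq_self {M : Type*} [MonoidWithZero M] [IsRightCancelMulZero M]
    {q : ℕ} {u : M} (hu0 : u ≠ 0) (hu : u ^ q = u) : u ^ (q - 1) = 1 := by
  rcases q with _ | q
  · exact pow_zero u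
  · exact mul_right_cancel₀ hu0 (by rwa [← pow_succ, one_mul])

theorem ncard_pow_eq_one_of_dvd {K : Type*} [Field K] [Fintype K] {d : ℕ}
    (hd : d ∣ Fintype.card K - 1) :
    {x : K | x ^ d = 1}.ncard = d := by
  have hd0 : d ≠ 0 := by
    rintro rfl
    have := Fintype.one_lt_card (α := K)
    omega
  have himage :
      {x : K | x ^ d = 1} = Units.val '' ((powMonoidHom d : Kˣ →* Kˣ).ker : Set Kˣ) := by
    ext x
    constructor
    · intro hx
      have hx0 : x ≠ 0 := by rintro rfl; simp [zero_pow hd0] at hx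
      exact ⟨Units.mk0 x hx0, by ext; simpa using hx, rfl⟩
    · rintro ⟨u, hu, rfl⟩
      simpa [Units.ext_iff] using hu
  rw [himage, Set.ncard_image_of_injective _ Units.val_injective, ← Nat.card_coe_set_eq,
    SetLike.coe_sort_coe, IsCyclic.card_powMonoidHom_ker, Nat.card_units,
    Nat.card_eq_fintype_card, Nat.gcd_eq_right hd]

section CardSq

variable {K : Type*} [Field K] [Fintype K] {q : ℕ}

theorem ncard_pow_eq_self (hcard : Fintype.card K = q ^ 2) : {x : K | x ^ q = x}.ncard = q := by
  have hq : 2 ≤ q := by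
    have := Fintype.one_lt_card (α := K)
    by_contra! h
    interval_cases q <;> simp_all
  have hset : {x : K | x ^ q = x} = insert 0 {x : K | x ^ (q - 1) = 1} := by
    ext x
    rcases eq_or_ne x 0 with rfl | hx0
    · simp [zero_pow (by omega : q ≠ 0)]
    · simp only [Set.mem_ofPred_eq, Set.mem_insert_iff, hx0, false_or]
      refine ⟨pow_sub_one_eq_one_of_pow_eq_self hx0, fun h => ?_⟩
      rw [← Nat.sub_add_cancel (by omega : 1 ≤ q), pow_succ, h, one_mul]
  have hdvd : q - 1 ∣ Fintype.card K - 1 := by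
    rw [hcard]
    exact Nat.sub_one_dvd_pow_sub_one q 2
  rw [hset, Set.ncard_insert_of_notMem (by simp [zero_pow (by omega : q - 1 ≠ 0)]),
    ncard_pow_eq_one_of_dvd hdvd]
  omega

theorem pow_pow_eq_self_of_card_eq_sq (hcard : Fintype.card K = q ^ 2) (x : K) :
    (x ^ q) ^ q = x := by
  rw [← pow_mul, ← sq, ← hcard, FiniteField.pow_card]

theorem isSquare_of_add_pow_eq_zero (hcard : Fintype.card K = q ^ 2) (hq : q % 4 = 3) {w : K}
    (hw : w + w ^ q = 0) : IsSquare w := by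
  rcases eq_or_ne w 0 with rfl | hw0
  · exact IsSquare.zero
  obtain ⟨j, rfl⟩ : ∃ j, q = 4 * j + 3 := ⟨q / 4, by omega⟩
  have hsq : (4 * j + 3) ^ 2 = 2 * ((4 * j + 2) * (2 * (j + 1))) + 1 := by ring
  have hchar : ringChar K ≠ 2 := by
    rw [Ne, FiniteField.even_card_iff_char_two, hcard, hsq]
    omega
  have hw1 : w ^ (4 * j + 2) = -1 :=
    mul_right_cancel₀ hw0 (by rw [← pow_succ]; linear_combination hw)
  rw [FiniteField.isSquare_iff hchar hw0, hcard, hsq, Nat.mul_add_div two_pos, pow_add, pow_mul,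
    hw1, pow_mul]
  norm_num

theorem exists_pow_eq_of_pow_eq_self (hcard : Fintype.card K = q ^ 2) {m : ℕ}
    (hm : m.gcd (q ^ 2 - 1) ∣ q + 1) {u : K} (hu0 : u ≠ 0) (hu : u ^ q = u) :
    ∃ s : K, s ^ m = u := by
  have hdvd : q - 1 ∣ (q ^ 2 - 1) / (q ^ 2 - 1).gcd m := by
    refine Nat.dvd_div_of_mul_dvd ?_
    rw [Nat.gcd_comm, mul_comm]
    calc (q - 1) * m.gcd (q ^ 2 - 1) ∣ (q - 1) * (q + 1) := mul_dvd_mul_left _ hm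
      _ = q ^ 2 - 1 := by rw [mul_comm, ← Nat.sq_sub_sq, one_pow]
  obtain ⟨c, hc⟩ := hdvd
  obtain ⟨s, hs⟩ := (IsCyclic.exists_pow_eq_iff (x := Units.mk0 u hu0) (m := m)).mpr (by
    rw [Nat.card_units, Nat.card_eq_fintype_card, hcard, hc, pow_mul, Units.ext_iff]
    simp [pow_sub_one_eq_one_of_pow_eq_self hu0 hu])
  exact ⟨s, by simpa [Units.ext_iff] using hs⟩

theorem setOf_mul_pow_add_pow_eq_zero (hcard : Fintype.card K = q ^ 2) (hq : q % 4 = 3) {m : ℕ}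
    (hm : Even m) (hm0 : m ≠ 0) {b : K} (hb : ¬IsSquare b) :
    {y : K | b * y ^ m + (b * y ^ m) ^ q = 0} = {0} := by
  ext y
  simp only [Set.mem_ofPred_eq, Set.mem_singleton_iff]
  refine ⟨fun hy => by_contra fun hy0 => hb ?_, fun hy => ?_⟩
  · obtain ⟨r, hr⟩ := isSquare_of_add_pow_eq_zero hcard hq hy
    obtain ⟨t, rfl⟩ := hm
    refine ⟨r / y ^ t, ?_⟩
    field_simp
    linear_combination hr
  · simp [hy, zero_pow hm0, zero_pow (by omega : q ≠ 0)]

theorem pow_add_one_pow_eq_self (hcard : Fintype.card K = q ^ 2) (y : K) :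
    (y ^ (q + 1)) ^ q = y ^ (q + 1) := by
  rw [pow_succ, mul_pow, pow_pow_eq_self_of_card_eq_sq hcard, mul_comm]

end CardSq

theorem ncard_setOf_eq_mul_of_map_mul {K : Type*} [GroupWithZero K] {T : K → K} {s u : K}
    (hs : s ≠ 0) (hu : u ≠ 0) (hT : ∀ y, T (s * y) = u * T y) (e : K) :
    {y | T y = u * e}.ncard = {y | T y = e}.ncard := by
  have : {y | T y = e} = (s * ·) ⁻¹' {y | T y = u * e} := by
    ext y
    simp [hT, hu]
  rw [this, Set.ncard_preimage_of_injective_subset_range (mul_right_injective₀ hs)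
    (by simp [(mul_left_surjective₀ hs).range_eq])]

theorem card_eq_one_add_mul_of_ncard_fiber {α β : Type*} [Fintype α] [DecidableEq β] [Zero β]
    {T : α → β} {S : Finset β} {c : ℕ} (hT : ∀ y, T y ∈ S) (h0 : 0 ∈ S)
    (hfiber0 : {y | T y = 0}.ncard = 1)
    (hfiber : ∀ v ∈ S, v ≠ 0 → {y | T y = v}.ncard = c) :
    Fintype.card α = 1 + (S.card - 1) * c := by
  have hfiber_card : ∀ v, (Finset.univ.filter fun y => T y = v).card = {y | T y = v}.ncard :=
    fun v => by rw [Set.ncard_eq_toFinset_card', Set.toFinset_ofPred]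
  rw [← Finset.card_univ, Finset.card_eq_sum_card_fiberwise fun y _ => hT y,
    ← Finset.add_sum_erase _ _ h0, hfiber_card, hfiber0,
    Finset.sum_congr rfl (g := fun _ => c) fun v hv => by
      rw [hfiber_card, hfiber v (Finset.mem_of_mem_erase hv) (Finset.ne_of_mem_erase hv)],
    Finset.sum_const, Finset.card_erase_of_mem h0, smul_eq_mul]

section FixedComponent

variable {K : Type} [Field K] {q : ℕ} {ξ : K}

/-- The `F`-coordinate of `z` in the decomposition `K = F ⊕ ξF`, where `F = {t | t ^ q = t}`:
if `z = s + t * ξ` with `s, t ∈ F`, then `z * ξ ^ q - z ^ q * ξ = s * (ξ ^ q - ξ)`. -/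
def fixedComponent (q : ℕ) (ξ z : K) : K := (z * ξ ^ q - z ^ q * ξ) / (ξ ^ q - ξ)

theorem mem_scalarSet_iff (hξ0 : ξ ≠ 0) {z : K} :
    z ∈ scalarSet K q ξ ↔ z * ξ ^ q = z ^ q * ξ := by
  constructor
  · rintro ⟨t, ht, rfl⟩
    rw [mul_pow, ht]
    ring
  · intro h
    refine ⟨z / ξ, ?_, (div_mul_cancel₀ z hξ0).symm⟩
    rw [div_pow, div_eq_div_iff (pow_ne_zero q hξ0) hξ0]
    exact h.symm

theorem fixedComponent_eq_zero_iff (hξ : ξ ^ q ≠ ξ) (hξ0 : ξ ≠ 0) {z : K} :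
    fixedComponent q ξ z = 0 ↔ z ∈ scalarSet K q ξ := by
  rw [mem_scalarSet_iff hξ0, fixedComponent, div_eq_zero_iff, sub_eq_zero, sub_eq_zero,
    or_iff_left hξ]

end FixedComponent

section Frobenius

variable {K : Type} [Field K] {p n : ℕ} [Fact p.Prime] [CharP K p]

local notation "q" => p ^ n

theorem add_pow_pow_eq_self [Fintype K] (hcard : Fintype.card K = q ^ 2) (x : K) :
    (x + x ^ q) ^ q = x + x ^ q := by
  rw [add_pow_char_pow, pow_pow_eq_self_of_card_eq_sq hcard, add_comm]

theorem fixedComponent_pow_eq_self [Fintype K] (hcard : Fintype.card K = q ^ 2) (ξ z : K) :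
    fixedComponent q ξ z ^ q = fixedComponent q ξ z := by
  have hσ := pow_pow_eq_self_of_card_eq_sq hcard
  rw [fixedComponent, div_pow, sub_pow_char_pow, sub_pow_char_pow, mul_pow, mul_pow, hσ, hσ,
    ← neg_div_neg_eq]
  ring_nf

theorem fixedComponent_sub (ξ z w : K) :
    fixedComponent q ξ (z - w) = fixedComponent q ξ z - fixedComponent q ξ w := by
  rw [fixedComponent, fixedComponent, fixedComponent, sub_pow_char_pow, ← sub_div]
  ring_nf

theorem fixedComponent_add_mul {ξ s t : K} (hξ : ξ ^ q ≠ ξ) (hs : s ^ q = s)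
    (ht : t ^ q = t) :
    fixedComponent q ξ (s + t * ξ) = s := by
  rw [fixedComponent, add_pow_char_pow, mul_pow, hs, ht, div_eq_iff (sub_ne_zero.mpr hξ)]
  ring

theorem add_mul_sub_mem_scalarSet_iff {ξ s t : K} (hξ : ξ ^ q ≠ ξ) (hs : s ^ q = s)
    (ht : t ^ q = t) (c : K) :
    s + t * ξ - c ∈ scalarSet K q ξ ↔ s = fixedComponent q ξ c := by
  have hξ0 : ξ ≠ 0 := by
    rintro rfl
    exact hξ (zero_pow (pow_ne_zero n (Fact.out : p.Prime).ne_zero))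
  rw [← fixedComponent_eq_zero_iff hξ hξ0, fixedComponent_sub, fixedComponent_add_mul hξ hs ht,
    sub_eq_zero]

theorem ncard_setOf_mul_pow_add_pow_eq [Fintype K] (hcard : Fintype.card K = q ^ 2)
    (hq : q % 4 = 3) {m : ℕ} (hm : Even m) (hm0 : m ≠ 0) (hgcd : m.gcd (q ^ 2 - 1) ∣ q + 1)
    {b : K} (hb : ¬IsSquare b) {e : K} (he : e ^ q = e) (he0 : e ≠ 0) :
    {y : K | b * y ^ m + (b * y ^ m) ^ q = e}.ncard = q + 1 := by
  classical
  set T : K → K := fun y => b * y ^ m + (b * y ^ m) ^ q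
  have hfiber : ∀ v ∈ {v : K | v ^ q = v}.toFinset, v ≠ 0 →
      {y | T y = v}.ncard = {y | T y = e}.ncard := by
    intro v hv hv0
    rw [Set.mem_toFinset, Set.mem_ofPred_eq] at hv
    have hu0 : v / e ≠ 0 := div_ne_zero hv0 he0
    obtain ⟨s, hs⟩ := exists_pow_eq_of_pow_eq_self hcard hgcd hu0 (by rw [div_pow, hv, he])
    have hs0 : s ≠ 0 := by rintro rfl; simp [zero_pow hm0] at hs; exact hu0 hs.symm
    rw [← ncard_setOf_eq_mul_of_map_mul hs0 hu0 (fun y => ?_) e, div_mul_cancel₀ _ he0]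
    simp only [T, mul_pow, hs, mul_left_comm b, mul_add, hv, he, div_pow]
    ring
  have hq1 : 1 ≤ q := by omega
  have hcount := card_eq_one_add_mul_of_ncard_fiber (T := T)
    (fun y => by simpa using add_pow_pow_eq_self hcard _) (by simp [zero_pow (by omega : q ≠ 0)])
    (by rw [setOf_mul_pow_add_pow_eq_zero hcard hq hm hm0 hb, Set.ncard_singleton]) hfiber
  rw [hcard, ← Set.ncard_eq_toFinset_card', ncard_pow_eq_self hcard] at hcount
  refine Nat.eq_of_mul_eq_mul_left (by omega : 0 < q - 1) ?_
  zify [hq1] at hcount ⊢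
  linear_combination -hcount

theorem ncard_setOf_shift_sub_mem_scalarSet [Fintype K] (hcard : Fintype.card K = q ^ 2)
    {ξ b : K} (hξ : ξ ^ q ≠ ξ) {m : ℕ} {f : K → K}
    (hf : ∀ x, f x = b * x ^ m + (b * x ^ m) ^ q + ξ * x ^ (q + 1)) (a c : K) :
    {x | f (x + a) - c ∈ scalarSet K q ξ}.ncard =
      {y | b * y ^ m + (b * y ^ m) ^ q = fixedComponent q ξ c}.ncard := by
  have hpreimage : {x | f (x + a) - c ∈ scalarSet K q ξ} =
      (· + a) ⁻¹' {y | b * y ^ m + (b * y ^ m) ^ q = fixedComponent q ξ c} := by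
    ext x
    rw [Set.mem_ofPred_eq, Set.mem_preimage, Set.mem_ofPred_eq, hf, mul_comm ξ,
      add_mul_sub_mem_scalarSet_iff hξ (add_pow_pow_eq_self hcard _)
        (pow_add_one_pow_eq_self hcard _)]
  rw [hpreimage, Set.ncard_preimage_of_injective_subset_range (add_left_injective a)
    ((add_right_surjective a).range_eq ▸ Set.subset_univ _)]

end Frobenius

section ShiftPlane

variable {K : Type} [Field K] {q : ℕ} {θ : K}

theorem affLine_inter_unitalSet (f : K → K) (a b : K) :
    affLine K f a b ∩ unitalSet K q θ =
      (fun x => Sum.inl (x, f (x + a) - b)) '' {x | f (x + a) - b ∈ scalarSet K q θ} := by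
  ext P
  simp only [affLine, unitalSet, scalarSet, Set.mem_inter_iff, Set.mem_ofPred_eq, Set.mem_image]
  aesop

theorem vertLine_inter_unitalSet (a : K) :
    vertLine K a ∩ unitalSet K q θ =
      insert (Sum.inr (Sum.inr ())) ((fun t => Sum.inl (a, t * θ)) '' {t | t ^ q = t}) := by
  ext P
  simp only [vertLine, unitalSet, Set.mem_inter_iff, Set.mem_ofPred_eq, Set.mem_image,
    Set.mem_insert_iff]
  aesop

theorem lineAtInf_inter_unitalSet :
    lineAtInf K ∩ unitalSet K q θ = {Sum.inr (Sum.inr ())} := by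
  ext P
  simp only [lineAtInf, unitalSet, Set.mem_inter_iff, Set.mem_ofPred_eq, Set.mem_singleton_iff]
  aesop

theorem ncard_line_inter_unitalSet [Finite K] (hθ : θ ≠ 0) {f : K → K}
    (hF : {t : K | t ^ q = t}.ncard = q)
    (hcount : ∀ a c : K, {x | f (x + a) - c ∈ scalarSet K q θ}.ncard = 1 ∨
      {x | f (x + a) - c ∈ scalarSet K q θ}.ncard = q + 1) :
    ∀ L ∈ shiftLines K f,
      (L ∩ unitalSet K q θ).ncard = 1 ∨ (L ∩ unitalSet K q θ).ncard = q + 1 := by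
  rintro L (⟨a, c, rfl⟩ | ⟨a, rfl⟩ | rfl)
  · rw [affLine_inter_unitalSet, Set.ncard_image_of_injective _
      fun x y h => (Prod.mk.inj (Sum.inl_injective h)).1]
    exact hcount a c
  · right
    rw [vertLine_inter_unitalSet, Set.ncard_insert_of_notMem (by simp),
      Set.ncard_image_of_injective _
        fun s t h => mul_right_cancel₀ hθ (Prod.mk.inj (Sum.inl_injective h)).2, hF]
  · left
    rw [lineAtInf_inter_unitalSet, Set.ncard_singleton]

end ShiftPlane

theorem stmt9_general (p n q : ℕ) (hp : Nat.Prime p) (hpodd : Odd p) (hq : q = p ^ n)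
    (hq4 : q % 4 = 3)
    (K : Type) [Field K] [Fintype K] (hcard : Fintype.card K = q ^ 2)
    (k : ℕ) (hkodd : Odd (n / Nat.gcd k n))
    (b : K) (hbns : ¬ IsSquare b)
    (ξ : K) (hξ : ξ ^ q ≠ ξ)
    (f : K → K)
    (hf : ∀ x : K,
      f x = b * x ^ (p ^ k + 1) + (b * x ^ (p ^ k + 1)) ^ q + ξ * x ^ (q + 1)) :
    (∀ a c : K,
      (c ∈ scalarSet K q ξ → {x : K | f (x + a) - c ∈ scalarSet K q ξ}.ncard = 1) ∧
      (c ∉ scalarSet K q ξ → {x : K | f (x + a) - c ∈ scalarSet K q ξ}.ncard = q + 1)) ∧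
    (∀ L ∈ shiftLines K f,
      (L ∩ unitalSet K q ξ).ncard = 1 ∨ (L ∩ unitalSet K q ξ).ncard = q + 1) ∧
    (∀ a : K, a ^ q = a →
      ((a ≠ 0 → {y : K | b * y ^ 2 + (b * y ^ 2) ^ q = a}.ncard = q + 1) ∧
       (a = 0 → {y : K | b * y ^ 2 + (b * y ^ 2) ^ q = a}.ncard = 1))) := by
  subst hq
  have : Fact p.Prime := ⟨hp⟩
  have : CharP K p := charP_of_card_eq_prime_pow (by rw [hcard, ← pow_mul])
  have hξ0 : ξ ≠ 0 := by
    rintro rfl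
    exact hξ (zero_pow (pow_ne_zero n hp.ne_zero))
  have hgcd : (p ^ k + 1).gcd ((p ^ n) ^ 2 - 1) ∣ p ^ n + 1 := by
    rw [← pow_mul, mul_comm]
    exact Nat.gcd_pow_add_one_pow_two_mul_sub_one_dvd hpodd hkodd
  have hM : Even (p ^ k + 1) := hpodd.pow.add_one
  have hcount : ∀ a c : K,
      (c ∈ scalarSet K (p ^ n) ξ →
        {x | f (x + a) - c ∈ scalarSet K (p ^ n) ξ}.ncard = 1) ∧
      (c ∉ scalarSet K (p ^ n) ξ →
        {x | f (x + a) - c ∈ scalarSet K (p ^ n) ξ}.ncard = p ^ n + 1) := by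
    intro a c
    rw [ncard_setOf_shift_sub_mem_scalarSet hcard hξ hf, ← fixedComponent_eq_zero_iff hξ hξ0]
    refine ⟨fun hc => ?_, ncard_setOf_mul_pow_add_pow_eq hcard hq4 hM (by omega) hgcd hbns
      (fixedComponent_pow_eq_self hcard ξ c)⟩
    rw [hc, setOf_mul_pow_add_pow_eq_zero hcard hq4 hM (by omega) hbns, Set.ncard_singleton]
  refine ⟨hcount, ncard_line_inter_unitalSet hξ0 (ncard_pow_eq_self hcard) fun a c => ?_,
    fun a ha =>
      ⟨ncard_setOf_mul_pow_add_pow_eq hcard hq4 even_two two_ne_zero ?_ hbns ha, ?_⟩⟩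
  · by_cases hc : c ∈ scalarSet K (p ^ n) ξ
    · exact Or.inl ((hcount a c).1 hc)
    · exact Or.inr ((hcount a c).2 hc)
  · exact (Nat.gcd_dvd_left _ _).trans (even_iff_two_dvd.mp hpodd.pow.add_one)
  · rintro rfl
    rw [setOf_mul_pow_add_pow_eq_zero hcard hq4 even_two two_ne_zero hbns, Set.ncard_singleton]

/-- Theorem 2.5 (e).  Let `q = pⁿ ≡ 3 (mod 4)`, `0 < k < n` with
`n/gcd(k,n)` odd, `b` a nonzero nonsquare in `K = F_{q²}`, `ξ ∈ K \ F`, and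
`f(x) = bx^{p^k+1} + (bx^{p^k+1})^q + ξx^{q+1}` (Budaghyan–Helleseth).  Then for
all `a c` the number of `x` with `f(x+a) − c ∈ ξF` is `1` if `c ∈ ξF` and `q+1`
otherwise; hence `U_ξ` is a unital in `Π(f)`.  In particular, for `a ∈ F` the
number of `y` with `by² + (by²)^q = a` is `q+1` if `a ≠ 0` and `1` if `a = 0`. -/
theorem stmt9 (p n q : ℕ) (hp : Nat.Prime p) (hpodd : Odd p) (hn : 0 < n) (hq : q = p ^ n)
    (hq4 : q % 4 = 3)
    (K : Type) [Field K] [Fintype K] (hcard : Fintype.card K = q ^ 2)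
    (k : ℕ) (hk0 : 0 < k) (hkn : k < n) (hkodd : Odd (n / Nat.gcd k n))
    (b : K) (hb0 : b ≠ 0) (hbns : ¬ IsSquare b)
    (ξ : K) (hξ : ξ ^ q ≠ ξ)
    (f : K → K)
    (hf : ∀ x : K,
      f x = b * x ^ (p ^ k + 1) + (b * x ^ (p ^ k + 1)) ^ q + ξ * x ^ (q + 1)) :
    (∀ a c : K,
      (c ∈ scalarSet K q ξ → {x : K | f (x + a) - c ∈ scalarSet K q ξ}.ncard = 1) ∧
      (c ∉ scalarSet K q ξ → {x : K | f (x + a) - c ∈ scalarSet K q ξ}.ncard = q + 1)) ∧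
    (∀ L ∈ shiftLines K f,
      (L ∩ unitalSet K q ξ).ncard = 1 ∨ (L ∩ unitalSet K q ξ).ncard = q + 1) ∧
    (∀ a : K, a ^ q = a →
      ((a ≠ 0 → {y : K | b * y ^ 2 + (b * y ^ 2) ^ q = a}.ncard = q + 1) ∧
       (a = 0 → {y : K | b * y ^ 2 + (b * y ^ 2) ^ q = a}.ncard = 1))) :=
  stmt9_general p n q hp hpodd hq hq4 K hcard k hkodd b hbns ξ hξ f hf
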